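/- Let 1 ≤ p < ∞, let I be any index set and let (X_i)_{i∈I} be a family of real Banach spaces each having the Opial property. Then the ℓp-sum X := [⊕_{i∈I} X_i]_p has the Opial property: for every weakly null sequence (x_n) in X and every x ∈ X with x ≠ 0, limsup_n ‖x_n‖_p < limsup_n ‖x_n − x‖_p. -/

import Mathlib

open Filter Topology MeasureTheory
open scoped ENNReal ZeroAtInfty

noncomputable section

/-- A sequence in a Banach space is weakly null if `φ (x n) → 0` for every
continuous linear functional `φ`. -/
def WeaklyNull {X : Type*} [NormedAddCommGroup X] [NormedSpace ℝ X] (u : ℕ → X) : Prop :=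
  ∀ φ : X →L[ℝ] ℝ, Tendsto (fun n => φ (u n)) atTop (𝓝 0)

/-- The Schur property: every weakly null sequence converges to `0` in norm. -/
def SchurProperty (X : Type*) [NormedAddCommGroup X] [NormedSpace ℝ X] : Prop :=
  ∀ u : ℕ → X, WeaklyNull u → Tendsto (fun n => ‖u n‖) atTop (𝓝 0)

/-- The Opial modulus `r_X(c)`. -/
def opialModulus (X : Type*) [NormedAddCommGroup X] [NormedSpace ℝ X] (c : ℝ) : ℝ :=
  sInf { d : ℝ | ∃ (x : X) (u : ℕ → X), c ≤ ‖x‖ ∧ WeaklyNull u ∧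
    1 ≤ liminf (fun n => ‖u n‖) atTop ∧
    d = liminf (fun n => ‖u n - x‖) atTop - 1 }

/-- The modulus `η_X(ε, R)`. -/
def etaModulus (X : Type*) [NormedAddCommGroup X] [NormedSpace ℝ X] (ε R : ℝ) : ℝ :=
  sInf { d : ℝ | ∃ (x : X) (u : ℕ → X), ε ≤ ‖x‖ ∧ WeaklyNull u ∧
    limsup (fun n => ‖u n‖) atTop ≤ R ∧
    d = liminf (fun n => ‖u n - x‖) atTop - liminf (fun n => ‖u n‖) atTop }

/-- The García-Falset coefficient `R(X)`. -/
def garciaFalset (X : Type*) [NormedAddCommGroup X] [NormedSpace ℝ X] : ℝ :=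
  sSup { a : ℝ | ∃ (x : X) (u : ℕ → X), ‖x‖ ≤ 1 ∧ (∀ n, ‖u n‖ ≤ 1) ∧ WeaklyNull u ∧
    a = liminf (fun n => ‖u n + x‖) atTop }

/-- The degree of WORTHness `w(X)`. -/
def worthDegree (X : Type*) [NormedAddCommGroup X] [NormedSpace ℝ X] : ℝ :=
  sSup { r : ℝ | 0 ≤ r ∧ ∀ (x : X) (u : ℕ → X), WeaklyNull u →
    r * liminf (fun n => ‖u n + x‖) atTop ≤ liminf (fun n => ‖u n - x‖) atTop }

/-- Gao's modulus of u-convexity `u_X(ε)`. -/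
def uModulus (X : Type*) [NormedAddCommGroup X] [NormedSpace ℝ X] (ε : ℝ) : ℝ :=
  sInf { d : ℝ | ∃ (x y : X) (φ : X →L[ℝ] ℝ), ‖x‖ = 1 ∧ ‖y‖ = 1 ∧ ‖φ‖ = 1 ∧
    φ x = 1 ∧ φ y ≤ 1 - ε ∧ d = 1 - ‖(2⁻¹ : ℝ) • (x + y)‖ }

/-- The c₀-sum of a family of Banach spaces: the closure, inside the ℓ∞-sum, of the
set of finitely supported families. -/
def c0Sum {I : Type*} (X : I → Type*) [∀ i, NormedAddCommGroup (X i)]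
    [∀ i, NormedSpace ℝ (X i)] : Submodule ℝ (lp X ∞) :=
  (Submodule.span ℝ { f : lp X ∞ | Set.Finite { i | (f : ∀ i, X i) i ≠ 0 } }).topologicalClosure

end

/-! Fix a coordinate `i₀` with `x i₀ ≠ 0`. Applied along subsequences, the Opial property of
`X i₀` gives a uniform gap `‖u n i₀‖ + γ ≤ ‖u n i₀ - x i₀‖` for large `n`, and that of every
other `X i` gives `‖u n i‖ ≤ ‖u n i - x i‖` for large `n`. Pick a finite set `F ∋ i₀` of
coordinates off which `x` has norm at most `δ`, and split `‖·‖ ^ p` into its part on `F` and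
the tail. Subtracting `x` changes the tail by at most `O(δ)`, so for small `δ` eventually
`‖u n‖ ^ p + γ ^ p / 2 ≤ ‖u n - x‖ ^ p`, which separates the two limsups. -/

lemma rpow_sub_rpow_le_mul_sub {P s t B : ℝ} (hP : 1 ≤ P) (ht : 0 ≤ t) (hts : t ≤ s)
    (hsB : s ≤ B) : s ^ P - t ^ P ≤ P * B ^ (P - 1) * (s - t) := by
  rcases (ht.trans hts).eq_or_lt with hs | hs
  · obtain rfl : t = 0 := le_antisymm (hts.trans hs.ge) ht
    simp [← hs]
  -- Bernoulli's inequality for `t / s` is the tangent line of `r ↦ r ^ P` at `s`.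
  have bernoulli : 1 + P * (t / s - 1) ≤ t ^ P / s ^ P := by
    have := one_add_mul_self_le_rpow_one_add (s := t / s - 1) (by linarith [div_nonneg ht hs.le]) hP
    rwa [add_sub_cancel, Real.div_rpow ht hs.le] at this
  have tangent : s ^ P - t ^ P ≤ P * s ^ (P - 1) * (s - t) := by
    rw [le_div_iff₀ (by positivity)] at bernoulli
    rw [Real.rpow_sub_one hs.ne']
    have : P * (t / s - 1) * s ^ P = - (P * (s ^ P / s) * (s - t)) := by field_simp; ring
    linarith
  calc s ^ P - t ^ P ≤ P * s ^ (P - 1) * (s - t) := tangent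
    _ ≤ P * B ^ (P - 1) * (s - t) := by gcongr

lemma rpow_le_rpow_add_mul_of_le_add {P r t δ B : ℝ} (hP : 1 ≤ P) (hr : 0 ≤ r) (ht : 0 ≤ t)
    (hδ : 0 ≤ δ) (hrt : r ≤ t + δ) (hB : t + δ ≤ B) : r ^ P ≤ t ^ P + P * B ^ (P - 1) * δ := by
  have := rpow_sub_rpow_le_mul_sub hP ht (le_add_of_nonneg_right hδ) hB
  have := Real.rpow_le_rpow hr hrt (by linarith : 0 ≤ P)
  simp only [add_sub_cancel_left] at *
  linarith

lemma add_le_of_rpow_add_le {P η a b B : ℝ} (hP : 1 ≤ P) (hη : 0 < η) (ha : 0 ≤ a)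
    (hb : 0 ≤ b) (hbB : b ≤ B) (h : a ^ P + η ≤ b ^ P) : a + η / (P * B ^ (P - 1)) ≤ b := by
  have hab : a < b := (Real.rpow_lt_rpow_iff ha hb (by linarith : 0 < P)).mp (by linarith)
  have hB : 0 < P * B ^ (P - 1) := by
    have := Real.rpow_pos_of_pos (ha.trans_lt (hab.trans_le hbB)) (P - 1)
    positivity
  rw [← le_sub_iff_add_le', div_le_iff₀' hB]
  linarith [rpow_sub_rpow_le_mul_sub hP ha hab.le hbB]

lemma limsup_lt_limsup_of_eventually_rpow_add_le {P η B : ℝ} {a b : ℕ → ℝ} (hP : 1 ≤ P)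
    (hη : 0 < η) (ha : ∀ n, 0 ≤ a n) (hb : ∀ n, 0 ≤ b n) (hbB : ∀ n, b n ≤ B)
    (h : ∀ᶠ n in atTop, a n ^ P + η ≤ b n ^ P) :
    limsup a atTop < limsup b atTop := by
  obtain ⟨m, hm⟩ := h.exists
  have hB : 0 < B := by
    refine lt_of_lt_of_le ((hb m).lt_of_ne' fun hbm => ?_) (hbB m)
    rw [hbm, Real.zero_rpow (by linarith)] at hm
    linarith [Real.rpow_nonneg (ha m) P]
  set κ := η / (P * B ^ (P - 1))
  have hκ : 0 < κ := by positivity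
  have hab : ∀ᶠ n in atTop, a n + κ ≤ b n :=
    h.mono fun n hn => add_le_of_rpow_add_le hP hη (ha n) (hb n) (hbB n) hn
  have ha_bdd : IsBoundedUnder (· ≤ ·) atTop a :=
    isBoundedUnder_of_eventually_le (a := B) (hab.mono fun n hn => by linarith [hbB n])
  calc limsup a atTop < limsup a atTop + κ := by linarith
    _ = limsup (fun n => a n + κ) atTop :=
      (limsup_add_const _ _ _ ha_bdd (isCoboundedUnder_le_of_le _ ha)).symm
    _ ≤ limsup b atTop :=
      limsup_le_limsup hab (isCoboundedUnder_le_of_le _ fun n => (ha n).trans (by linarith))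
        (isBoundedUnder_of_eventually_le (.of_forall hbB))

lemma exists_pos_eventually_add_le_of_subseq_lt {s t : ℕ → ℝ} {B : ℝ} (hs : ∀ n, |s n| ≤ B)
    (ht : ∀ n, |t n| ≤ B)
    (h : ∀ θ : ℕ → ℕ, StrictMono θ → ∀ a b, Tendsto (fun n => s (θ n)) atTop (𝓝 a) →
      Tendsto (fun n => t (θ n)) atTop (𝓝 b) → a < b) :
    ∃ γ > 0, ∀ᶠ n in atTop, s n + γ ≤ t n := by
  by_contra! H
  obtain ⟨φ, hφ, hφ_lt⟩ := extraction_forall_of_frequently fun m : ℕ =>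
    H (1 / (m + 1)) Nat.one_div_pos_of_nat
  obtain ⟨⟨a, b⟩, -, ψ, hψ, hlim⟩ := tendsto_subseq_of_bounded
    (Metric.isBounded_closedBall (x := (0 : ℝ × ℝ)) (r := B))
    (x := fun m => (s (φ m), t (φ m))) fun m => by simp [Prod.norm_def, hs, ht]
  have ha : Tendsto (fun m => s (φ (ψ m))) atTop (𝓝 a) := (continuous_fst.tendsto _).comp hlim
  have hb : Tendsto (fun m => t (φ (ψ m))) atTop (𝓝 b) := (continuous_snd.tendsto _).comp hlim
  have hε : Tendsto (fun m => 1 / ((ψ m : ℝ) + 1)) atTop (𝓝 0) :=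
    tendsto_one_div_add_atTop_nhds_zero_nat.comp hψ.tendsto_atTop
  have hba : b ≤ a := le_of_tendsto_of_tendsto hb (by simpa using ha.add hε)
    (.of_forall fun m => (hφ_lt (ψ m)).le)
  exact (h (φ ∘ ψ) (hφ.comp hψ) a b ha hb).not_ge hba

section WeaklyNull

variable {X Y : Type*} [NormedAddCommGroup X] [NormedSpace ℝ X] [NormedAddCommGroup Y]
  [NormedSpace ℝ Y] {u : ℕ → X}

lemma WeaklyNull.map (hu : WeaklyNull u) (T : X →L[ℝ] Y) : WeaklyNull fun n => T (u n) :=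
  fun φ => hu (φ.comp T)

lemma WeaklyNull.comp_tendsto (hu : WeaklyNull u) {θ : ℕ → ℕ} (hθ : Tendsto θ atTop atTop) :
    WeaklyNull fun n => u (θ n) :=
  fun φ => (hu φ).comp hθ

lemma WeaklyNull.exists_norm_le (hu : WeaklyNull u) : ∃ C, ∀ n, ‖u n‖ ≤ C := by
  -- Banach–Steinhaus on the (complete) dual, applied to the images of `u n` in the bidual.
  obtain ⟨C, hC⟩ := banach_steinhaus (g := fun n => NormedSpace.inclusionInDoubleDual ℝ X (u n))
    fun φ => by
      obtain ⟨C, hC⟩ := (hu φ).norm.bddAbove_range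
      exact ⟨C, fun n => hC ⟨n, rfl⟩⟩
  exact ⟨C, fun n => (NormedSpace.inclusionInDoubleDualLi ℝ).norm_map (u n) ▸ hC n⟩

end WeaklyNull

def OpialProperty (X : Type*) [NormedAddCommGroup X] [NormedSpace ℝ X] : Prop :=
  ∀ u : ℕ → X, WeaklyNull u → ∀ z : X, z ≠ 0 →
    limsup (fun n => ‖u n‖) atTop < limsup (fun n => ‖u n - z‖) atTop

namespace OpialProperty

variable {X : Type*} [NormedAddCommGroup X] [NormedSpace ℝ X] {v : ℕ → X}

lemma exists_pos_eventually_norm_add_le (hX : OpialProperty X) (hv : WeaklyNull v) {z : X}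
    (hz : z ≠ 0) : ∃ γ > 0, ∀ᶠ n in atTop, ‖v n‖ + γ ≤ ‖v n - z‖ := by
  obtain ⟨C, hC⟩ := hv.exists_norm_le
  refine exists_pos_eventually_add_le_of_subseq_lt (B := C + ‖z‖) (fun n => ?_) (fun n => ?_)
    fun θ hθ a b ha hb => ?_
  · rw [abs_norm]
    linarith [hC n, norm_nonneg z]
  · rw [abs_norm]
    linarith [hC n, norm_sub_le (v n) z]
  · simpa [ha.limsup_eq, hb.limsup_eq] using hX _ (hv.comp_tendsto hθ.tendsto_atTop) z hz

lemma eventually_norm_le_norm_sub (hX : OpialProperty X) (hv : WeaklyNull v) (z : X) :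
    ∀ᶠ n in atTop, ‖v n‖ ≤ ‖v n - z‖ := by
  rcases eq_or_ne z 0 with rfl | hz
  · simp
  · obtain ⟨γ, hγ, h⟩ := hX.exists_pos_eventually_norm_add_le hv hz
    exact h.mono fun n hn => by linarith

end OpialProperty

lemma Finset.eventually_sum_add_le_sum {α ι : Type*} {l : Filter α} {s : Finset ι}
    {f g : ι → α → ℝ} {i₀ : ι} (hi₀ : i₀ ∈ s) {γ : ℝ} (h₀ : ∀ᶠ n in l, f i₀ n + γ ≤ g i₀ n)
    (h : ∀ i ∈ s, ∀ᶠ n in l, f i n ≤ g i n) :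
    ∀ᶠ n in l, ∑ i ∈ s, f i n + γ ≤ ∑ i ∈ s, g i n := by
  classical
  filter_upwards [h₀, (eventually_all_finset s).2 h] with n h₀n hn
  rw [← Finset.add_sum_erase s _ hi₀, ← Finset.add_sum_erase s _ hi₀]
  have := Finset.sum_le_sum fun i (hi : i ∈ s.erase i₀) => hn i (Finset.mem_of_mem_erase hi)
  linarith

namespace lp

variable {α : Type*} [DecidableEq α] {E : α → Type*} [∀ i, NormedAddCommGroup (E i)]
  {p : ℝ≥0∞} [Fact (1 ≤ p)]

lemma norm_sub_sum_single_le (hp : 0 < p.toReal) (f : lp E p) (s : Finset α) :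
    ‖f - ∑ i ∈ s, lp.single p i (f i)‖ ≤ ‖f‖ := by
  have := lp.norm_compl_sum_single hp f s
  have : 0 ≤ ∑ i ∈ s, ‖f i‖ ^ p.toReal := by positivity
  exact (Real.rpow_le_rpow_iff (norm_nonneg _) (norm_nonneg _) hp).mp (by linarith)

lemma norm_sub_sum_single_rpow_le (hp : 1 ≤ p.toReal) (f x : lp E p) (s : Finset α) {δ B : ℝ}
    (hδ : 0 ≤ δ) (hx : ‖x - ∑ i ∈ s, lp.single p i (x i)‖ ≤ δ) (hB : ‖f - x‖ + δ ≤ B) :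
    ‖f - ∑ i ∈ s, lp.single p i (f i)‖ ^ p.toReal ≤
      ‖(f - x) - ∑ i ∈ s, lp.single p i ((f - x) i)‖ ^ p.toReal +
        p.toReal * B ^ (p.toReal - 1) * δ := by
  have hsplit : f - ∑ i ∈ s, lp.single p i (f i) =
      ((f - x) - ∑ i ∈ s, lp.single p i ((f - x) i)) + (x - ∑ i ∈ s, lp.single p i (x i)) := by
    simp only [lp.coeFn_sub, Pi.sub_apply, lp.single_sub, Finset.sum_sub_distrib]
    abel
  apply rpow_le_rpow_add_mul_of_le_add hp (norm_nonneg _) (norm_nonneg _) hδ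
  · rw [hsplit]
    exact (norm_add_le _ _).trans (by linarith)
  · linarith [norm_sub_sum_single_le (by linarith) (f - x) s]

lemma exists_finset_mem_norm_sub_sum_single_le (hp : p ≠ ⊤) (x : lp E p) (i₀ : α) {δ : ℝ}
    (hδ : 0 < δ) : ∃ s : Finset α, i₀ ∈ s ∧ ‖x - ∑ i ∈ s, lp.single p i (x i)‖ ≤ δ := by
  have hlim := tendsto_iff_norm_sub_tendsto_zero.mp (lp.hasSum_single hp x)
  obtain ⟨s, hs, hi₀s⟩ :=
    ((hlim.eventually (eventually_le_nhds hδ)).and (eventually_ge_atTop {i₀})).exists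
  exact ⟨s, Finset.singleton_subset_iff.mp hi₀s, by rwa [norm_sub_rev]⟩

end lp

theorem OpialProperty.lp {p : ℝ≥0∞} [Fact (1 ≤ p)] (hp : p ≠ ⊤) {I : Type*} {X : I → Type*}
    [∀ i, NormedAddCommGroup (X i)] [∀ i, NormedSpace ℝ (X i)]
    (h : ∀ i, OpialProperty (X i)) : OpialProperty (lp X p) := by
  classical
  intro u hu x hx
  have hP : 1 ≤ p.toReal := by simpa using ENNReal.toReal_mono hp (Fact.out : 1 ≤ p)
  set P := p.toReal
  obtain ⟨C, hC⟩ := hu.exists_norm_le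
  obtain ⟨i₀, hi₀⟩ : ∃ i, x i ≠ 0 := by
    by_contra! h0
    exact hx (lp.ext (funext h0))
  have hu_coord : ∀ i, WeaklyNull fun n => u n i := fun i => hu.map (lp.evalCLM ℝ X p i)
  obtain ⟨γ, hγ, hgap⟩ := (h i₀).exists_pos_eventually_norm_add_le (hu_coord i₀) hi₀
  set B := C + ‖x‖ + 1
  have hB : 0 < B := by linarith [norm_nonneg (u 0), hC 0, norm_nonneg x]
  set δ := min 1 (γ ^ P / (2 * (P * B ^ (P - 1))))
  have hδ : 0 < δ := by positivity
  obtain ⟨F, hi₀F, hxF⟩ := lp.exists_finset_mem_norm_sub_sum_single_le hp x i₀ hδ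
  have hcoord : ∀ᶠ n in atTop,
      ∑ i ∈ F, ‖u n i‖ ^ P + γ ^ P ≤ ∑ i ∈ F, ‖(u n - x) i‖ ^ P := by
    refine Finset.eventually_sum_add_le_sum hi₀F (hgap.mono fun n hn => ?_) fun i _ =>
      ((h i).eventually_norm_le_norm_sub (hu_coord i) (x i)).mono fun n hn => ?_
    · rw [lp.coeFn_sub, Pi.sub_apply]
      calc ‖u n i₀‖ ^ P + γ ^ P ≤ (‖u n i₀‖ + γ) ^ P :=
            Real.add_rpow_le_rpow_add (norm_nonneg _) hγ.le hP
        _ ≤ ‖u n i₀ - x i₀‖ ^ P := Real.rpow_le_rpow (by positivity) hn (by linarith)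
    · rw [lp.coeFn_sub, Pi.sub_apply]
      exact Real.rpow_le_rpow (norm_nonneg _) hn (by linarith)
  have htail : ∀ n, ‖u n - ∑ i ∈ F, lp.single p i (u n i)‖ ^ P ≤
      ‖(u n - x) - ∑ i ∈ F, lp.single p i ((u n - x) i)‖ ^ P + γ ^ P / 2 := by
    have hδγ : P * B ^ (P - 1) * δ ≤ γ ^ P / 2 := by
      have := min_le_right 1 (γ ^ P / (2 * (P * B ^ (P - 1))))
      rw [le_div_iff₀ (by positivity)] at this
      linarith
    refine fun n =>
      (lp.norm_sub_sum_single_rpow_le (B := B) hP (u n) x F hδ.le hxF ?_).trans (by linarith)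
    linarith [norm_sub_le (u n) x, hC n, min_le_left 1 (γ ^ P / (2 * (P * B ^ (P - 1))))]
  have hgain : ∀ᶠ n in atTop, ‖u n‖ ^ P + γ ^ P / 2 ≤ ‖u n - x‖ ^ P := hcoord.mono fun n hn => by
    linarith [lp.norm_compl_sum_single (by linarith) (u n) F,
      lp.norm_compl_sum_single (by linarith) (u n - x) F, htail n]
  exact limsup_lt_limsup_of_eventually_rpow_add_le (B := B) hP (by positivity)
    (fun _ => norm_nonneg _) (fun _ => norm_nonneg _)
    (fun n => by linarith [norm_sub_le (u n) x, hC n]) hgain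

theorem statement13_general (p : ℝ≥0∞) [Fact (1 ≤ p)] (hp : p ≠ ⊤) {I : Type*}
    (X : I → Type*) [∀ i, NormedAddCommGroup (X i)] [∀ i, NormedSpace ℝ (X i)]
    (hOp : ∀ i, ∀ u : ℕ → X i, WeaklyNull u → ∀ z : X i, z ≠ 0 →
      limsup (fun n => ‖u n‖) atTop < limsup (fun n => ‖u n - z‖) atTop)
    (u : ℕ → lp X p) (hu : WeaklyNull u) (x : lp X p) (hx : x ≠ 0) :
    limsup (fun n => ‖u n‖) atTop < limsup (fun n => ‖u n - x‖) atTop :=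
  OpialProperty.lp hp hOp u hu x hx

/-- The ℓᵖ-sum (`1 ≤ p < ∞`) of a family of Banach spaces with the Opial property has the
Opial property. -/
theorem statement13 (p : ℝ≥0∞) [Fact (1 ≤ p)] (hp : p ≠ ⊤) {I : Type*}
    (X : I → Type*) [∀ i, NormedAddCommGroup (X i)] [∀ i, NormedSpace ℝ (X i)]
    [∀ i, CompleteSpace (X i)]
    (hOp : ∀ i, ∀ u : ℕ → X i, WeaklyNull u → ∀ z : X i, z ≠ 0 →
      limsup (fun n => ‖u n‖) atTop < limsup (fun n => ‖u n - z‖) atTop)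
    (u : ℕ → lp X p) (hu : WeaklyNull u) (x : lp X p) (hx : x ≠ 0) :
    limsup (fun n => ‖u n‖) atTop < limsup (fun n => ‖u n - x‖) atTop :=
  statement13_general p hp X hOp u hu x hx
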